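/- (Dephasing example, strategy using CSI) Let 0 ≤ ε₀ ≤ 1/2 ≤ ε₁ ≤ 1, 0 ≤ q ≤ 1/2, and 0 ≤ λ ≤ 1/2. Let Z be the Pauli phase-flip matrix on ℂ², let Φ_{AA'} be the two-qubit maximally entangled state, and consider the input state ρ_{SEA'A} = (1−q)|0⟩⟨0|_S ⊗ |0⟩⟨0|_E ⊗ [(1−λ)Φ_{AA'} + λ(𝟙⊗Z)Φ_{AA'}(𝟙⊗Z)] + q|1⟩⟨1|_S ⊗ |1⟩⟨1|_E ⊗ [(1−λ)(𝟙⊗Z)Φ_{AA'}(𝟙⊗Z) + λΦ_{AA'}], and let ρ_{SBA} be the output obtained by applying to A' the qubit dephasing channel P^{(s)}(σ) = (1−ε_s)σ + ε_s ZσZ conditioned on the value s of the state system E. Then, with ε̂ = (1−q)ε₀ + q(1−ε₁) and a∗b = (1−a)b + a(1−b): (i) I(A;S)_ρ = 0, (ii) I(A;B)_ρ = 2 − h₂(λ∗ε̂), and (iii) I(S;AB)_ρ = h₂(λ∗ε̂) − (1−q) h₂(λ∗ε₀) − q h₂(λ∗ε₁), where h₂(x) = −x log₂ x − (1−x) log₂(1−x)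 is the binary entropy function. -/

import Mathlib

noncomputable section
open scoped Kronecker ComplexOrder
open Matrix

namespace QMask

/-- von Neumann entropy, in bits (base-2 logarithm). -/
def vnEntropy {α : Type*} [Fintype α] [DecidableEq α] (ρ : Matrix α α ℂ) : ℝ :=
  letI := Classical.dec ρ.IsHermitian
  if h : ρ.IsHermitian then - ∑ i, h.eigenvalues i * Real.logb 2 (h.eigenvalues i) else 0

/-- The binary entropy function `h₂`. -/
def binEnt (x : ℝ) : ℝ := -x * Real.logb 2 x - (1 - x) * Real.logb 2 (1 - x)

/-- `a ∗ b = (1−a)b + a(1−b)`. -/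
def convStar (a b : ℝ) : ℝ := (1 - a) * b + a * (1 - b)

/-- The Pauli phase-flip matrix `Z = diag(1, −1)`. -/
def Zmat : Matrix (Fin 2) (Fin 2) ℂ := !![1, 0; 0, -1]

/-- The two-qubit maximally entangled vector `(|00⟩ + |11⟩)/√2`. -/
def phiVec : Fin 2 × Fin 2 → ℂ := fun p => if p.1 = p.2 then ((Real.sqrt 2)⁻¹ : ℝ) else 0

/-- The two-qubit maximally entangled state `Φ_{AA'}`. -/
def PhiAA : Matrix (Fin 2 × Fin 2) (Fin 2 × Fin 2) ℂ :=
  Matrix.of fun x y => phiVec x * star (phiVec y)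

/-- `(𝟙 ⊗ Z) M (𝟙 ⊗ Z)`. -/
def conjIZ (M : Matrix (Fin 2 × Fin 2) (Fin 2 × Fin 2) ℂ) :
    Matrix (Fin 2 × Fin 2) (Fin 2 × Fin 2) ℂ :=
  ((1 : Matrix (Fin 2) (Fin 2) ℂ) ⊗ₖ Zmat) * M * ((1 : Matrix (Fin 2) (Fin 2) ℂ) ⊗ₖ Zmat)

/-- Reduced state on `A` of a state indexed by `S × A × B`. -/
def rA (ρ : Matrix (Fin 2 × Fin 2 × Fin 2) (Fin 2 × Fin 2 × Fin 2) ℂ) :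
    Matrix (Fin 2) (Fin 2) ℂ :=
  Matrix.of fun x y => ∑ s : Fin 2, ∑ b : Fin 2, ρ (s, x, b) (s, y, b)

/-- Reduced state on `S`. -/
def rS (ρ : Matrix (Fin 2 × Fin 2 × Fin 2) (Fin 2 × Fin 2 × Fin 2) ℂ) :
    Matrix (Fin 2) (Fin 2) ℂ :=
  Matrix.of fun x y => ∑ a : Fin 2, ∑ b : Fin 2, ρ (x, a, b) (y, a, b)

/-- Reduced state on `B`. -/
def rB (ρ : Matrix (Fin 2 × Fin 2 × Fin 2) (Fin 2 × Fin 2 × Fin 2) ℂ) :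
    Matrix (Fin 2) (Fin 2) ℂ :=
  Matrix.of fun x y => ∑ s : Fin 2, ∑ a : Fin 2, ρ (s, a, x) (s, a, y)

/-- Reduced state on `S, A`. -/
def rSA (ρ : Matrix (Fin 2 × Fin 2 × Fin 2) (Fin 2 × Fin 2 × Fin 2) ℂ) :
    Matrix (Fin 2 × Fin 2) (Fin 2 × Fin 2) ℂ :=
  Matrix.of fun x y => ∑ b : Fin 2, ρ (x.1, x.2, b) (y.1, y.2, b)

/-- Reduced state on `A, B`. -/
def rAB (ρ : Matrix (Fin 2 × Fin 2 × Fin 2) (Fin 2 × Fin 2 × Fin 2) ℂ) :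
    Matrix (Fin 2 × Fin 2) (Fin 2 × Fin 2) ℂ :=
  Matrix.of fun x y => ∑ s : Fin 2, ρ (s, x.1, x.2) (s, y.1, y.2)

/-- `I(A;S)_ρ` for a state on `S × A × B`. -/
def iAS (ρ : Matrix (Fin 2 × Fin 2 × Fin 2) (Fin 2 × Fin 2 × Fin 2) ℂ) : ℝ :=
  vnEntropy (rA ρ) + vnEntropy (rS ρ) - vnEntropy (rSA ρ)

/-- `I(A;B)_ρ` for a state on `S × A × B`. -/
def iAB (ρ : Matrix (Fin 2 × Fin 2 × Fin 2) (Fin 2 × Fin 2 × Fin 2) ℂ) : ℝ :=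
  vnEntropy (rA ρ) + vnEntropy (rB ρ) - vnEntropy (rAB ρ)

/-- `I(S;AB)_ρ` for a state on `S × A × B`. -/
def iSAB (ρ : Matrix (Fin 2 × Fin 2 × Fin 2) (Fin 2 × Fin 2 × Fin 2) ℂ) : ℝ :=
  vnEntropy (rS ρ) + vnEntropy (rAB ρ) - vnEntropy ρ


/-!
Dephasing a Bell-diagonal state `B(p) = (1-p)Φ + p(𝟙⊗Z)Φ(𝟙⊗Z)` with parameter `ε` gives
`B(p∗ε)`, and the second input is `B(1-λ)`. Hence `ρ_{SAB} = Σ_s q(s)|s⟩⟨s| ⊗ B(p_s)` with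
`p₀ = λ∗ε₀`, `p₁ = 1 - λ∗ε₁`. The Bell basis diagonalises `B(p)` with spectrum `{1-p, p, 0, 0}`,
so `H(B(p)) = h₂(p)`; the entropy of a block-diagonal matrix is the sum over the blocks, and
`H(c·σ) = c·H(σ) - c log c · Tr σ`. The marginals of `B(p)` on either qubit are `𝟙/2`, so
`ρ_A = ρ_B = 𝟙/2`, `ρ_{SA} = ρ_S ⊗ 𝟙/2` and `ρ_{AB} = B(Σ_s q(s) p_s) = B(λ∗ε̂)`.
-/

def negMulLogb (x : ℝ) : ℝ := -(x * Real.logb 2 x)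

-- Valid for all reals: `Real.logb` is built on `log |x|`, and `logb 2 0 = 0`.
lemma negMulLogb_mul (x y : ℝ) :
    negMulLogb (x * y) = y * negMulLogb x + x * negMulLogb y := by
  rcases eq_or_ne x 0 with rfl | hx
  · simp [negMulLogb]
  rcases eq_or_ne y 0 with rfl | hy
  · simp [negMulLogb]
  simp only [negMulLogb, Real.logb_mul hx hy]
  ring

lemma negMulLogb_half : negMulLogb (1 / 2) = 1 / 2 := by
  simp [negMulLogb, Real.logb_inv]

lemma binEnt_eq (x : ℝ) : binEnt x = negMulLogb x + negMulLogb (1 - x) := by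
  simp only [binEnt, negMulLogb]
  ring

lemma binEnt_one_sub (x : ℝ) : binEnt (1 - x) = binEnt x := by
  rw [binEnt_eq, binEnt_eq, sub_sub_cancel, add_comm]

section Entropy

open Polynomial

variable {n : Type*} [Fintype n] [DecidableEq n]

lemma vnEntropy_eq_sum_eigenvalues {A : Matrix n n ℂ} (hA : A.IsHermitian) :
    vnEntropy A = ∑ i, negMulLogb (hA.eigenvalues i) := by
  rw [vnEntropy, dif_pos hA, ← Finset.sum_neg_distrib]
  rfl

lemma vnEntropy_eq_sum_of_charpoly_eq {A : Matrix n n ℂ} (hA : A.IsHermitian)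
    {κ : Type*} [Fintype κ] (d : κ → ℝ) (h : A.charpoly = ∏ k, (X - C (d k : ℂ))) :
    vnEntropy A = ∑ k, negMulLogb (d k) := by
  have hroots : Finset.univ.val.map (fun k => (d k : ℂ)) =
      Finset.univ.val.map (RCLike.ofReal ∘ hA.eigenvalues) := by
    rw [← hA.roots_charpoly_eq_eigenvalues, h,
      roots_prod _ _ (Finset.prod_ne_zero_iff.mpr fun k _ => X_sub_C_ne_zero _)]
    simp
  have hmap := congrArg (Multiset.map fun z : ℂ => negMulLogb z.re) hroots
  simp only [Multiset.map_map, Function.comp_def] at hmap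
  simp only [vnEntropy_eq_sum_eigenvalues hA, Finset.sum_eq_multiset_sum]
  simpa using congrArg Multiset.sum hmap.symm

lemma vnEntropy_diagonal (d : n → ℝ) :
    vnEntropy (diagonal fun i => (d i : ℂ)) = ∑ i, negMulLogb (d i) :=
  vnEntropy_eq_sum_of_charpoly_eq (isHermitian_diagonal_iff.mpr fun _ => Complex.conj_ofReal _) d
    (charpoly_diagonal _)

lemma vnEntropy_unitary_conj_diagonal {U : Matrix n n ℂ} (hU : U ∈ unitaryGroup n ℂ)
    (d : n → ℝ) :
    vnEntropy (U * diagonal (fun i => (d i : ℂ)) * star U) = ∑ i, negMulLogb (d i) := by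
  refine vnEntropy_eq_sum_of_charpoly_eq ?_ d ?_
  · exact isHermitian_mul_mul_conjTranspose _
      (isHermitian_diagonal_iff.mpr fun _ => Complex.conj_ofReal _)
  · rw [charpoly_mul_comm, ← mul_assoc, (mem_unitaryGroup_iff').mp hU, one_mul,
      charpoly_diagonal]

lemma vnEntropy_smul {A : Matrix n n ℂ} (hA : A.IsHermitian) (c : ℝ) :
    vnEntropy (c • A) = c * vnEntropy A + negMulLogb c * A.trace.re := by
  have hcA : c • A = hA.eigenvectorUnitary * diagonal (fun i => ((c * hA.eigenvalues i : ℝ) : ℂ))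
      * star (hA.eigenvectorUnitary : Matrix n n ℂ) := by
    conv_lhs => rw [hA.spectral_theorem]
    rw [Unitary.conjStarAlgAut_apply, ← Matrix.smul_mul, ← Matrix.mul_smul, ← diagonal_smul]
    congr 3
    ext i
    simp
  rw [hcA, vnEntropy_unitary_conj_diagonal hA.eigenvectorUnitary.2, hA.trace_eq_sum_eigenvalues,
    vnEntropy_eq_sum_eigenvalues hA]
  simp [negMulLogb_mul, Finset.sum_add_distrib, Finset.mul_sum, Finset.sum_mul, add_comm,
    mul_comm (negMulLogb c)]

lemma charpoly_blockDiagonal {σ : Type*} [Fintype σ] [DecidableEq σ] (f : σ → Matrix n n ℂ) :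
    (blockDiagonal f).charpoly = ∏ s, (f s).charpoly := by
  have : charmatrix (blockDiagonal f) = blockDiagonal fun s => charmatrix (f s) := by
    ext ⟨i, s⟩ ⟨j, t⟩
    by_cases hst : s = t
    · subst hst
      by_cases hij : i = j <;> simp [blockDiagonal_apply, hij]
    · simp [blockDiagonal_apply, hst]
  rw [charpoly, this, det_blockDiagonal]
  rfl

end Entropy

section ClassicalQuantum

variable {σ ι : Type*} [DecidableEq σ]

/-- `∑ s, |s⟩⟨s| ⊗ f s`, i.e. `blockDiagonal f` with the block index as the left tensor factor. -/
def cqState (f : σ → Matrix ι ι ℂ) : Matrix (σ × ι) (σ × ι) ℂ :=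
  reindex (Equiv.prodComm ι σ) (Equiv.prodComm ι σ) (blockDiagonal f)

lemma cqState_apply (f : σ → Matrix ι ι ℂ) (x y : σ × ι) :
    cqState f x y = if x.1 = y.1 then f x.1 x.2 y.2 else 0 := by
  simp [cqState, blockDiagonal_apply]

lemma vnEntropy_cqState [Fintype σ] [Fintype ι] [DecidableEq ι] {f : σ → Matrix ι ι ℂ}
    (hf : ∀ s, (f s).IsHermitian) :
    vnEntropy (cqState f) = ∑ s, vnEntropy (f s) := by
  have hH : (cqState f).IsHermitian := (isHermitian_blockDiagonal_iff.mpr hf).submatrix _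
  rw [vnEntropy_eq_sum_of_charpoly_eq hH (fun x : σ × ι => (hf x.1).eigenvalues x.2),
    Fintype.sum_prod_type]
  · simp only [vnEntropy_eq_sum_eigenvalues (hf _)]
  · rw [cqState, charpoly_reindex, charpoly_blockDiagonal, Fintype.prod_prod_type]
    simp only [(hf _).charpoly_eq]
    rfl

end ClassicalQuantum

section PartialTrace

variable {m n : Type*}

def traceRight [Fintype n] (M : Matrix (m × n) (m × n) ℂ) : Matrix m m ℂ :=
  of fun a a' => ∑ b, M (a, b) (a', b)

def traceLeft [Fintype m] (M : Matrix (m × n) (m × n) ℂ) : Matrix n n ℂ :=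
  of fun b b' => ∑ a, M (a, b) (a, b')

lemma traceRight_smul [Fintype n] (c : ℝ) (M : Matrix (m × n) (m × n) ℂ) :
    traceRight (c • M) = c • traceRight M := by
  ext
  simp [traceRight, Finset.smul_sum]

lemma traceLeft_smul [Fintype m] (c : ℝ) (M : Matrix (m × n) (m × n) ℂ) :
    traceLeft (c • M) = c • traceLeft M := by
  ext
  simp [traceLeft, Finset.smul_sum]

end PartialTrace

section Bell

lemma conjIZ_apply (M : Matrix (Fin 2 × Fin 2) (Fin 2 × Fin 2) ℂ) (x y : Fin 2 × Fin 2) :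
    conjIZ M x y = Zmat x.2 x.2 * M x y * Zmat y.2 y.2 := by
  have hK : (1 : Matrix (Fin 2) (Fin 2) ℂ) ⊗ₖ Zmat = diagonal fun x => Zmat x.2 x.2 := by
    ext ⟨a, b⟩ ⟨c, d⟩
    fin_cases a <;> fin_cases b <;> fin_cases c <;> fin_cases d <;> simp [Zmat]
  rw [conjIZ, hK, mul_diagonal, diagonal_mul]

lemma Zmat_apply_self_mul_self (b : Fin 2) : Zmat b b * Zmat b b = 1 := by
  fin_cases b <;> simp [Zmat]

lemma conjIZ_conjIZ (M : Matrix (Fin 2 × Fin 2) (Fin 2 × Fin 2) ℂ) : conjIZ (conjIZ M) = M := by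
  ext x y
  simp only [conjIZ_apply]
  linear_combination (M x y * Zmat y.2 y.2 * Zmat y.2 y.2) * Zmat_apply_self_mul_self x.2
    + M x y * Zmat_apply_self_mul_self y.2

lemma conjIZ_add (M N : Matrix (Fin 2 × Fin 2) (Fin 2 × Fin 2) ℂ) :
    conjIZ (M + N) = conjIZ M + conjIZ N := by
  simp only [conjIZ, Matrix.mul_add, Matrix.add_mul]

lemma conjIZ_smul (c : ℝ) (M : Matrix (Fin 2 × Fin 2) (Fin 2 × Fin 2) ℂ) :
    conjIZ (c • M) = c • conjIZ M := by
  simp only [conjIZ, Matrix.mul_smul, Matrix.smul_mul]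

def bellDiag (p : ℝ) : Matrix (Fin 2 × Fin 2) (Fin 2 × Fin 2) ℂ :=
  (1 - p) • PhiAA + p • conjIZ PhiAA

lemma bellDiag_one_sub (p : ℝ) : bellDiag (1 - p) = (1 - p) • conjIZ PhiAA + p • PhiAA := by
  rw [bellDiag, sub_sub_cancel, add_comm]

lemma dephase_bellDiag (p ε : ℝ) :
    (1 - ε) • bellDiag p + ε • conjIZ (bellDiag p) = bellDiag (convStar p ε) := by
  simp only [bellDiag, conjIZ_add, conjIZ_smul, conjIZ_conjIZ, convStar]
  module

lemma sum_smul_bellDiag {σ : Type*} [Fintype σ] (q p : σ → ℝ) (hq : ∑ s, q s = 1) :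
    ∑ s, q s • bellDiag (p s) = bellDiag (∑ s, q s * p s) := by
  simp only [bellDiag, smul_add, smul_smul, Finset.sum_add_distrib, ← Finset.sum_smul, mul_sub,
    mul_one, Finset.sum_sub_distrib, hq]

lemma inv_sqrt_two_mul_self : (Real.sqrt 2 : ℂ)⁻¹ * (Real.sqrt 2 : ℂ)⁻¹ = 2⁻¹ := by
  rw [← mul_inv, ← Complex.ofReal_mul, Real.mul_self_sqrt zero_le_two]
  norm_num

lemma PhiAA_apply (x y : Fin 2 × Fin 2) :
    PhiAA x y = if x.1 = x.2 ∧ y.1 = y.2 then 1 / 2 else 0 := by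
  by_cases hx : x.1 = x.2 <;> by_cases hy : y.1 = y.2 <;>
    simp [PhiAA, phiVec, hx, hy, inv_sqrt_two_mul_self]

lemma bellDiag_apply (p : ℝ) (x y : Fin 2 × Fin 2) :
    bellDiag p x y =
      if x.1 = x.2 ∧ y.1 = y.2 then (if x.2 = y.2 then 1 / 2 else (1 - 2 * p) / 2) else 0 := by
  rcases x with ⟨a, b⟩
  rcases y with ⟨c, d⟩
  fin_cases a <;> fin_cases b <;> fin_cases c <;> fin_cases d <;>
    simp [bellDiag, conjIZ_apply, PhiAA_apply, Zmat] <;> ring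

lemma trace_bellDiag (p : ℝ) : (bellDiag p).trace = 1 := by
  simp [trace, Fintype.sum_prod_type, bellDiag_apply]
  norm_num

lemma traceRight_bellDiag (p : ℝ) :
    traceRight (bellDiag p) = (1 / 2 : ℝ) • (1 : Matrix (Fin 2) (Fin 2) ℂ) := by
  ext a a'
  fin_cases a <;> fin_cases a' <;> simp [traceRight, bellDiag_apply]

lemma traceLeft_bellDiag (p : ℝ) :
    traceLeft (bellDiag p) = (1 / 2 : ℝ) • (1 : Matrix (Fin 2) (Fin 2) ℂ) := by
  ext b b'
  fin_cases b <;> fin_cases b' <;> simp [traceLeft, bellDiag_apply]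

-- Columns `(0,0)` and `(1,1)` are the Bell vectors `Φ⁺` and `Φ⁻`, the others `|01⟩` and `|10⟩`.
def bellBasis : Matrix (Fin 2 × Fin 2) (Fin 2 × Fin 2) ℂ :=
  of fun x k =>
    if x.1 = x.2 ∧ k.1 = k.2 then (if x.2 = 1 ∧ k.2 = 1 then -1 else 1) * (Real.sqrt 2 : ℂ)⁻¹
    else if x = k then 1 else 0

def bellWeights (p : ℝ) : Fin 2 × Fin 2 → ℝ :=
  fun k => if k = (0, 0) then 1 - p else if k = (1, 1) then p else 0

lemma bellBasis_mem_unitaryGroup : bellBasis ∈ unitaryGroup (Fin 2 × Fin 2) ℂ := by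
  rw [mem_unitaryGroup_iff]
  ext ⟨a, b⟩ ⟨c, d⟩
  fin_cases a <;> fin_cases b <;> fin_cases c <;> fin_cases d <;>
    simp [bellBasis, mul_apply, Fintype.sum_prod_type, one_apply, inv_sqrt_two_mul_self] <;>
    norm_num

lemma bellDiag_eq_conj_diagonal (p : ℝ) :
    bellDiag p = bellBasis * diagonal (fun k => (bellWeights p k : ℂ)) * star bellBasis := by
  ext ⟨a, b⟩ ⟨c, d⟩
  fin_cases a <;> fin_cases b <;> fin_cases c <;> fin_cases d <;>
    simp [bellDiag_apply, bellBasis, bellWeights, mul_apply, Fintype.sum_prod_type] <;>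
    first
    | linear_combination -inv_sqrt_two_mul_self
    | linear_combination (2 * (p : ℂ) - 1) * inv_sqrt_two_mul_self

lemma bellDiag_isHermitian (p : ℝ) : (bellDiag p).IsHermitian := by
  rw [bellDiag_eq_conj_diagonal]
  exact isHermitian_mul_mul_conjTranspose _
    (isHermitian_diagonal_iff.mpr fun _ => Complex.conj_ofReal _)

lemma vnEntropy_bellDiag (p : ℝ) : vnEntropy (bellDiag p) = binEnt p := by
  rw [bellDiag_eq_conj_diagonal, vnEntropy_unitary_conj_diagonal bellBasis_mem_unitaryGroup]
  simp [Fintype.sum_prod_type, bellWeights, binEnt_eq, negMulLogb]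

end Bell

lemma vnEntropy_half_smul_one :
    vnEntropy ((1 / 2 : ℝ) • (1 : Matrix (Fin 2) (Fin 2) ℂ)) = 1 := by
  have h : (1 / 2 : ℝ) • (1 : Matrix (Fin 2) (Fin 2) ℂ) = diagonal fun _ => ((1 / 2 : ℝ) : ℂ) := by
    rw [← diagonal_one, ← diagonal_smul]
    congr 1
    ext
    simp
  rw [h, vnEntropy_diagonal, Fin.sum_univ_two, negMulLogb_half]
  norm_num

section ReducedStates

variable (f : Fin 2 → Matrix (Fin 2 × Fin 2) (Fin 2 × Fin 2) ℂ)

lemma rA_cqState : rA (cqState f) = ∑ s, traceRight (f s) := by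
  ext
  simp [rA, traceRight, cqState_apply, Matrix.sum_apply]

lemma rB_cqState : rB (cqState f) = ∑ s, traceLeft (f s) := by
  ext
  simp [rB, traceLeft, cqState_apply, Matrix.sum_apply]

lemma rS_cqState : rS (cqState f) = diagonal fun s => (f s).trace := by
  ext s t
  by_cases h : s = t
  · subst h
    simp [rS, cqState_apply, trace, Fintype.sum_prod_type]
  · simp [rS, cqState_apply, h]

lemma rSA_cqState : rSA (cqState f) = cqState fun s => traceRight (f s) := by
  ext
  simp [rSA, traceRight, cqState_apply]

lemma rAB_cqState : rAB (cqState f) = ∑ s, f s := by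
  ext
  simp [rAB, cqState_apply, Matrix.sum_apply]

end ReducedStates

section BellCQ

variable (q p : Fin 2 → ℝ)

def bellCQ : Matrix (Fin 2 × Fin 2 × Fin 2) (Fin 2 × Fin 2 × Fin 2) ℂ :=
  cqState fun s => q s • bellDiag (p s)

lemma vnEntropy_bellCQ :
    vnEntropy (bellCQ q p) = ∑ s, (q s * binEnt (p s) + negMulLogb (q s)) := by
  rw [bellCQ, vnEntropy_cqState fun s => (bellDiag_isHermitian _).smul (IsSelfAdjoint.all (q s))]
  simp [vnEntropy_smul (bellDiag_isHermitian _), vnEntropy_bellDiag, trace_bellDiag]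

lemma vnEntropy_rS_bellCQ : vnEntropy (rS (bellCQ q p)) = ∑ s, negMulLogb (q s) := by
  rw [bellCQ, rS_cqState, ← vnEntropy_diagonal]
  simp [trace_smul, trace_bellDiag]

variable {q}

lemma vnEntropy_rA_bellCQ (hq : ∑ s, q s = 1) : vnEntropy (rA (bellCQ q p)) = 1 := by
  rw [bellCQ, rA_cqState]
  simp only [traceRight_smul, traceRight_bellDiag, ← Finset.sum_smul, hq, one_smul]
  exact vnEntropy_half_smul_one

lemma vnEntropy_rB_bellCQ (hq : ∑ s, q s = 1) : vnEntropy (rB (bellCQ q p)) = 1 := by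
  rw [bellCQ, rB_cqState]
  simp only [traceLeft_smul, traceLeft_bellDiag, ← Finset.sum_smul, hq, one_smul]
  exact vnEntropy_half_smul_one

lemma vnEntropy_rSA_bellCQ (hq : ∑ s, q s = 1) :
    vnEntropy (rSA (bellCQ q p)) = 1 + ∑ s, negMulLogb (q s) := by
  have hH : ((1 / 2 : ℝ) • (1 : Matrix (Fin 2) (Fin 2) ℂ)).IsHermitian :=
    isHermitian_one.smul (IsSelfAdjoint.all (1 / 2 : ℝ))
  have htr : ((1 / 2 : ℝ) • (1 : Matrix (Fin 2) (Fin 2) ℂ)).trace.re = 1 := by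
    simp [trace_smul]
  rw [bellCQ, rSA_cqState]
  simp only [traceRight_smul, traceRight_bellDiag]
  rw [vnEntropy_cqState fun s => hH.smul (IsSelfAdjoint.all (q s))]
  simp only [vnEntropy_smul hH, vnEntropy_half_smul_one, htr, mul_one, Finset.sum_add_distrib, hq]

lemma vnEntropy_rAB_bellCQ (hq : ∑ s, q s = 1) :
    vnEntropy (rAB (bellCQ q p)) = binEnt (∑ s, q s * p s) := by
  rw [bellCQ, rAB_cqState, sum_smul_bellDiag q p hq, vnEntropy_bellDiag]

lemma iAS_bellCQ (hq : ∑ s, q s = 1) : iAS (bellCQ q p) = 0 := by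
  rw [iAS, vnEntropy_rA_bellCQ p hq, vnEntropy_rS_bellCQ, vnEntropy_rSA_bellCQ p hq]
  ring

lemma iAB_bellCQ (hq : ∑ s, q s = 1) :
    iAB (bellCQ q p) = 2 - binEnt (∑ s, q s * p s) := by
  rw [iAB, vnEntropy_rA_bellCQ p hq, vnEntropy_rB_bellCQ p hq, vnEntropy_rAB_bellCQ p hq]
  ring

lemma iSAB_bellCQ (hq : ∑ s, q s = 1) :
    iSAB (bellCQ q p) = binEnt (∑ s, q s * p s) - ∑ s, q s * binEnt (p s) := by
  rw [iSAB, vnEntropy_rS_bellCQ, vnEntropy_rAB_bellCQ p hq, vnEntropy_bellCQ,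
    Finset.sum_add_distrib]
  ring

end BellCQ

theorem dephasing_with_csi_general (ε₀ ε₁ q lam : ℝ) :
    -- the `AA'`-input conditioned on the classical state `s`:
    -- a phase flip controlled by `S + Y mod 2` with `Y ∼ Bernoulli(λ)`
    let ρAA : Fin 2 → Matrix (Fin 2 × Fin 2) (Fin 2 × Fin 2) ℂ :=
      ![(1 - lam) • PhiAA + lam • conjIZ PhiAA,
        (1 - lam) • conjIZ PhiAA + lam • PhiAA]
    -- the dephasing parameter as a function of the classical state `s`
    let eps : Fin 2 → ℝ := ![ε₀, ε₁]
    -- the distribution of the classical state `S`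
    let qd : Fin 2 → ℝ := ![1 - q, q]
    -- the output state `ρ_{SAB} = Σ_s q(s)|s⟩⟨s|_S ⊗ (id_A ⊗ P^{(s)})(ρ_{AA'}^{(s)})`
    let ρSAB : Matrix (Fin 2 × Fin 2 × Fin 2) (Fin 2 × Fin 2 × Fin 2) ℂ :=
      Matrix.of fun x y =>
        if x.1 = y.1 then
          (qd x.1 : ℂ) *
            ((1 - eps x.1) • ρAA x.1 + (eps x.1) • conjIZ (ρAA x.1)) x.2 y.2
        else 0
    let εhat : ℝ := (1 - q) * ε₀ + q * (1 - ε₁)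
    iAS ρSAB = 0 ∧
    iAB ρSAB = 2 - binEnt (convStar lam εhat) ∧
    iSAB ρSAB = binEnt (convStar lam εhat)
      - (1 - q) * binEnt (convStar lam ε₀) - q * binEnt (convStar lam ε₁) := by
  intro ρAA eps qd ρSAB εhat
  set pd : Fin 2 → ℝ := ![convStar lam ε₀, 1 - convStar lam ε₁]
  have hout : ∀ s, (1 - eps s) • ρAA s + eps s • conjIZ (ρAA s) = bellDiag (pd s) := by
    intro s
    fin_cases s
    · exact dephase_bellDiag lam ε₀
    · show (1 - ε₁) • ((1 - lam) • conjIZ PhiAA + lam • PhiAA)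
          + ε₁ • conjIZ ((1 - lam) • conjIZ PhiAA + lam • PhiAA) = bellDiag (1 - convStar lam ε₁)
      rw [← bellDiag_one_sub, dephase_bellDiag]
      congr 1
      simp only [convStar]
      ring
  have hρ : ρSAB = bellCQ qd pd := by
    ext x y
    simp only [ρSAB, bellCQ, cqState_apply, of_apply, hout, Matrix.smul_apply, Complex.real_smul]
  have hq : ∑ s, qd s = 1 := by simp [qd]
  have havg : ∑ s, qd s * pd s = convStar lam εhat := by
    simp [qd, pd, εhat, convStar]
    ring
  rw [hρ, iAS_bellCQ pd hq, iAB_bellCQ pd hq, iSAB_bellCQ pd hq, havg]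
  simp [qd, pd, binEnt_one_sub]
  ring

/-- dephasing example, strategy using CSI. -/
theorem dephasing_with_csi (ε₀ ε₁ q lam : ℝ)
    (hε₀ : 0 ≤ ε₀) (hε₀' : ε₀ ≤ 1/2) (hε₁ : 1/2 ≤ ε₁) (hε₁' : ε₁ ≤ 1)
    (hq : 0 ≤ q) (hq' : q ≤ 1/2) (hlam : 0 ≤ lam) (hlam' : lam ≤ 1/2) :
    -- the `AA'`-input conditioned on the classical state `s`:
    -- a phase flip controlled by `S + Y mod 2` with `Y ∼ Bernoulli(λ)`
    let ρAA : Fin 2 → Matrix (Fin 2 × Fin 2) (Fin 2 × Fin 2) ℂ :=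
      ![(1 - lam) • PhiAA + lam • conjIZ PhiAA,
        (1 - lam) • conjIZ PhiAA + lam • PhiAA]
    -- the dephasing parameter as a function of the classical state `s`
    let eps : Fin 2 → ℝ := ![ε₀, ε₁]
    -- the distribution of the classical state `S`
    let qd : Fin 2 → ℝ := ![1 - q, q]
    -- the output state `ρ_{SAB} = Σ_s q(s)|s⟩⟨s|_S ⊗ (id_A ⊗ P^{(s)})(ρ_{AA'}^{(s)})`
    let ρSAB : Matrix (Fin 2 × Fin 2 × Fin 2) (Fin 2 × Fin 2 × Fin 2) ℂ :=
      Matrix.of fun x y =>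
        if x.1 = y.1 then
          (qd x.1 : ℂ) *
            ((1 - eps x.1) • ρAA x.1 + (eps x.1) • conjIZ (ρAA x.1)) x.2 y.2
        else 0
    let εhat : ℝ := (1 - q) * ε₀ + q * (1 - ε₁)
    iAS ρSAB = 0 ∧
    iAB ρSAB = 2 - binEnt (convStar lam εhat) ∧
    iSAB ρSAB = binEnt (convStar lam εhat)
      - (1 - q) * binEnt (convStar lam ε₀) - q * binEnt (convStar lam ε₁) :=
  dephasing_with_csi_general ε₀ ε₁ q lam

end QMask
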